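/- Let τ = (2^{4/3}/√3)·b·θ¹ + θ³ be the 1-form on the 5-manifold with the coframe θⁱ of g_F. If f is a smooth function with d(fτ) = 0, then f ≡ 0. -/

import Mathlib

noncomputable section

/-! Points of the 5-manifold are m = (x,y,z,p,q) : Fin 5 → ℝ, with
x = m 0, y = m 1, z = m 2, p = m 3, q = m 4. -/

/-- The coframe 1-form θ¹ = e^{−2bx/3}(dy − p dx). -/
def theta1 (b : ℝ) (m : Fin 5 → ℝ) (v : Fin 5 → ℝ) : ℝ :=
  Real.exp (-(2*b/3) * m 0) * (v 1 - m 3 * v 0)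

/-- The coframe 1-form θ³ = e^{−2bx/3}·(−(2^{4/3}/√3))(dp − q dx). -/
def theta3 (b : ℝ) (m : Fin 5 → ℝ) (v : Fin 5 → ℝ) : ℝ :=
  Real.exp (-(2*b/3) * m 0) * (-((2:ℝ) ^ ((4:ℝ)/3) / Real.sqrt 3) * (v 3 - m 4 * v 0))

/-- The 1-form τ = (2^{4/3}/√3)·b·θ¹ + θ³. -/
def tau (b : ℝ) (m : Fin 5 → ℝ) (v : Fin 5 → ℝ) : ℝ :=
  ((2:ℝ) ^ ((4:ℝ)/3) / Real.sqrt 3) * b * theta1 b m v + theta3 b m v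

/-- The exterior derivative of a 1-form ω, evaluated on constant vector fields:
dω(v,w) = ∂_v(ω(w)) − ∂_w(ω(v)). -/
def extD (ω : (Fin 5 → ℝ) → (Fin 5 → ℝ) → ℝ) (m v w : Fin 5 → ℝ) : ℝ :=
  fderiv ℝ (fun y => ω y w) m v - fderiv ℝ (fun y => ω y v) m w

set_option maxHeartbeats 1000000 in
/-- If f is a smooth function with d(fτ) = 0, then f ≡ 0. -/
theorem closed_multiple_of_tau_vanishes (b : ℝ) (f : (Fin 5 → ℝ) → ℝ)
    (hf : ContDiff ℝ (⊤ : ℕ∞) f)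
    (hclosed : ∀ m v w, extD (fun y u => f y * tau b y u) m v w = 0) :
    ∀ m, f m = 0 := by
  intro m
  set C : ℝ := (2:ℝ) ^ ((4:ℝ)/3) / Real.sqrt 3 with hCdef
  have hCpos : 0 < C := by
    apply div_pos (Real.rpow_pos_of_pos (by norm_num) _)
    exact Real.sqrt_pos.mpr (by norm_num)
  set e0 : Fin 5 → ℝ := ![1,0,0,0,0] with he0
  set e3 : Fin 5 → ℝ := ![0,0,0,1,0] with he3
  set e4 : Fin 5 → ℝ := ![0,0,0,0,1] with he4
  set E : ℝ := Real.exp (-(2*b/3) * m 0) with hE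
  have hEpos : 0 < E := Real.exp_pos _
  -- fderiv of f at m
  have hfd : HasFDerivAt f (fderiv ℝ f m) m :=
    (hf.differentiable (by simp) m).hasFDerivAt
  have hproj : ∀ i : Fin 5, HasFDerivAt (fun y : Fin 5 → ℝ => y i)
      (ContinuousLinearMap.proj (R := ℝ) (φ := fun _ : Fin 5 => ℝ) i) m :=
    fun i => (ContinuousLinearMap.proj (R := ℝ) (φ := fun _ : Fin 5 => ℝ) i).hasFDerivAt
  have hexp : HasFDerivAt (fun y : Fin 5 → ℝ => Real.exp (-(2*b/3) * y 0))
      (E • ((-(2*b/3)) • ContinuousLinearMap.proj (R := ℝ) (φ := fun _ : Fin 5 => ℝ) 0)) m := by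
    have h := ((hproj 0).const_mul (-(2*b/3))).exp
    rw [hE]
    exact h
  -- the one-form applied to e4 is identically zero
  have htau4 : (fun y => f y * tau b y e4) = fun _ => (0:ℝ) := by
    funext y
    simp [tau, theta1, theta3, he4]
  -- tau applied to e3
  have htau3 : ∀ y : Fin 5 → ℝ, tau b y e3 = -C * Real.exp (-(2*b/3) * y 0) := by
    intro y
    simp [tau, theta1, theta3, he3, hCdef]
    ring
  -- tau applied to e0
  have htau0 : ∀ y : Fin 5 → ℝ,
      tau b y e0 = Real.exp (-(2*b/3) * y 0) * (C * y 4 - C * b * y 3) := by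
    intro y
    simp [tau, theta1, theta3, he0, hCdef]
    ring
  -- Step 1: fderiv f m e4 = 0, from hclosed m e4 e3
  have h1 := hclosed m e4 e3
  have hD3 : HasFDerivAt (fun y => f y * tau b y e3)
      (f m • ((-C) • (E • ((-(2*b/3)) • ContinuousLinearMap.proj (R := ℝ) (φ := fun _ : Fin 5 => ℝ) 0)))
        + (-C * E) • fderiv ℝ f m) m := by
    have hg : HasFDerivAt (fun y : Fin 5 → ℝ => -C * Real.exp (-(2*b/3) * y 0))
        ((-C) • (E • ((-(2*b/3)) • ContinuousLinearMap.proj (R := ℝ) (φ := fun _ : Fin 5 => ℝ) 0))) m :=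
      hexp.const_mul (-C)
    have := hfd.mul hg
    simp only [htau3] at this ⊢
    exact this
  have hzero4 : fderiv ℝ (fun y => f y * tau b y e4) m = 0 := by
    rw [htau4]; simp
  rw [extD, hzero4, hD3.fderiv] at h1
  simp only [ContinuousLinearMap.zero_apply, sub_zero, ContinuousLinearMap.add_apply,
    ContinuousLinearMap.smul_apply, ContinuousLinearMap.proj_apply, smul_eq_mul] at h1
  have he40 : e4 0 = 0 := by simp [he4]
  rw [he40] at h1
  have hdf4 : fderiv ℝ f m e4 = 0 := by
    have : (-C * E) * fderiv ℝ f m e4 = 0 := by linarith [h1]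
    rcases mul_eq_zero.mp this with h | h
    · exact absurd h (by nlinarith)
    · exact h
  -- Step 2: f m = 0, from hclosed m e4 e0
  have h2 := hclosed m e4 e0
  have hlin : HasFDerivAt (fun y : Fin 5 → ℝ => C * y 4 - C * b * y 3)
      (C • ContinuousLinearMap.proj (R := ℝ) (φ := fun _ : Fin 5 => ℝ) 4
        - (C * b) • ContinuousLinearMap.proj (R := ℝ) (φ := fun _ : Fin 5 => ℝ) 3) m :=
    ((hproj 4).const_mul C).sub ((hproj 3).const_mul (C * b))
  have hD0 : HasFDerivAt (fun y => f y * tau b y e0)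
      (f m • (E • (C • ContinuousLinearMap.proj (R := ℝ) (φ := fun _ : Fin 5 => ℝ) 4
          - (C * b) • ContinuousLinearMap.proj (R := ℝ) (φ := fun _ : Fin 5 => ℝ) 3)
        + (C * m 4 - C * b * m 3) • (E • ((-(2*b/3)) • ContinuousLinearMap.proj (R := ℝ) (φ := fun _ : Fin 5 => ℝ) 0)))
        + (E * (C * m 4 - C * b * m 3)) • fderiv ℝ f m) m := by
    have hg := hexp.mul hlin
    have := hfd.mul hg
    simp only [htau0] at this ⊢
    exact this
  rw [extD, hzero4, hD0.fderiv] at h2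
  simp only [ContinuousLinearMap.zero_apply, sub_zero, ContinuousLinearMap.add_apply,
    ContinuousLinearMap.smul_apply, ContinuousLinearMap.sub_apply,
    ContinuousLinearMap.proj_apply, smul_eq_mul, hdf4] at h2
  have he43 : e4 3 = 0 := by simp [he4]
  have he44 : e4 4 = 1 := by simp [he4]
  rw [he40, he43, he44] at h2
  have : f m * (E * C) = 0 := by nlinarith [h2]
  rcases mul_eq_zero.mp this with h | h
  · exact h
  · exact absurd h (by nlinarith)


end
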